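/- The entries of the inverse frame matrix satisfy the gTT-relations: in any algebra B as in the context, if E is the two-sided inverse of the frame matrix M, then Σ_{a,b} g^{ab} E^i_a E^j_b = ρ^2 g^{ij} and Σ_{i,j} g_{ij} E^i_a E^j_b = ρ^2 g_{ab} for all i, j, a, b ∈ {1, 2, 3}. -/
import Mathlib


noncomputable section

/-- The FRT R-matrix of `SO_q(3)`: `Rfrt q i j k l = R^{ij}_{kl}`, with indices
`0, 1, 2` corresponding to `(−, 0, +)` (i.e. to `1, 2, 3`). -/
def Rfrt (q : ℝ) (i j k l : Fin 3) : ℂ :=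
  let Q : ℂ := (q : ℂ)
  let s : ℂ := (Real.sqrt q : ℂ)
  match i.1, j.1, k.1, l.1 with
  | 0,0,0,0 => Q                        -- R^{11}_{11} = q
  | 2,2,2,2 => Q                        -- R^{33}_{33} = q
  | 1,1,1,1 => 1                        -- R^{22}_{22} = 1
  | 0,1,0,1 => 1                        -- R^{12}_{12} = 1
  | 1,0,1,0 => 1                        -- R^{21}_{21} = 1
  | 1,2,1,2 => 1                        -- R^{23}_{23} = 1
  | 2,1,2,1 => 1                        -- R^{32}_{32} = 1
  | 0,2,0,2 => Q⁻¹                      -- R^{13}_{13} = q⁻¹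
  | 2,0,2,0 => Q⁻¹                      -- R^{31}_{31} = q⁻¹
  | 1,0,0,1 => Q - Q⁻¹                  -- R^{21}_{12} = q − q⁻¹
  | 2,1,1,2 => Q - Q⁻¹                  -- R^{32}_{23} = q − q⁻¹
  | 2,0,0,2 => (Q - Q⁻¹) * (1 - Q⁻¹)    -- R^{31}_{13} = (q − q⁻¹)(1 − q⁻¹)
  | 1,1,0,2 => -(Q - Q⁻¹) * s⁻¹         -- R^{22}_{13} = −(q − q⁻¹) q^{-1/2}
  | 2,0,1,1 => -(Q - Q⁻¹) * s⁻¹         -- R^{31}_{22} = −(q − q⁻¹) q^{-1/2}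
  | _,_,_,_ => 0

/-- The braid matrix `R̂` of `SO_q(3)`, as a linear endomorphism (matrix) of `ℂ³ ⊗ ℂ³`:
`R̂^{ij}_{kl} = R^{ji}_{kl}`, with row index the pair `(i,j)` and column index `(k,l)`. -/
def Rhat (q : ℝ) : Matrix (Fin 3 × Fin 3) (Fin 3 × Fin 3) ℂ :=
  fun p r => Rfrt q p.2 p.1 r.1 r.2

/-- The `SO_q(3)`-covariant metric: `g_{13} = q^{-1/2}`, `g_{22} = 1`, `g_{31} = q^{1/2}`,
all other entries zero (indices `0, 1, 2` correspond to `1, 2, 3`); `g^{ij} := g_{ij}`. -/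
def gm (q : ℝ) (i j : Fin 3) : ℂ :=
  match i.1, j.1 with
  | 0, 2 => ((Real.sqrt q : ℂ))⁻¹
  | 1, 1 => 1
  | 2, 0 => (Real.sqrt q : ℂ)
  | _, _ => 0

/-- Data of an extended quantum Euclidean space inside a unital associative `ℂ`-algebra
`B`: coordinates `x^i`, differentials `ξ^i`, the dilatation `Λ` with inverse `Λi`, the
inverse `u` of `x²`, and the radius `ρ` with inverse `ρi`, subject to the defining
relations (indices `0, 1, 2` correspond to `1, 2, 3`, i.e. to `(−, 0, +)`). -/
structure QSpace (q : ℝ) (B : Type*) [Ring B] [Algebra ℂ B] where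
  x : Fin 3 → B
  ξ : Fin 3 → B
  Λ : B
  Λi : B
  u : B
  ρ : B
  ρi : B
  rel_x12 : x 0 * x 1 = (q : ℂ) • (x 1 * x 0)
  rel_x32 : x 2 * x 1 = ((q : ℂ))⁻¹ • (x 1 * x 2)
  rel_x31 : x 2 * x 0 - x 0 * x 2 = ((Real.sqrt q - (Real.sqrt q)⁻¹ : ℝ) : ℂ) • (x 1 * x 1)
  rel_xξ : ∀ i j : Fin 3,
    x i * ξ j = (q : ℂ) • ∑ k : Fin 3, ∑ l : Fin 3, Rhat q (i, j) (k, l) • (ξ k * x l)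
  rel_ΛΛi : Λ * Λi = 1
  rel_ΛiΛ : Λi * Λ = 1
  rel_xΛ : ∀ i : Fin 3, x i * Λ = (q : ℂ) • (Λ * x i)
  rel_ξΛ : ∀ i : Fin 3, ξ i * Λ = (q : ℂ) • (Λ * ξ i)
  rel_ux : u * x 1 = 1
  rel_xu : x 1 * u = 1
  rel_ρρi : ρ * ρi = 1
  rel_ρiρ : ρi * ρ = 1
  rel_ρx : ∀ i : Fin 3, ρ * x i = x i * ρ
  rel_ρξ : ∀ i : Fin 3, ρ * ξ i = (q : ℂ) • (ξ i * ρ)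
  rel_ρsq : ρ * ρ = (Real.sqrt q : ℂ) • (x 2 * x 0) + x 1 * x 1 +
    ((Real.sqrt q : ℂ))⁻¹ • (x 0 * x 2)

/-- The frame matrix `M = ‖θ^a_i‖`:
`M¹₁ = u`, `M²₁ = q^{1/2}(q+1) ρ⁻¹ u x³`, `M²₂ = ρ⁻¹`,
`M³₁ = −q^{3/2}(q+1) ρ⁻² u (x³)²`, `M³₂ = −(q+1) ρ⁻² x³`, `M³₃ = ρ⁻² x²`,
all other entries zero. -/
def Mmat {q : ℝ} {B : Type*} [Ring B] [Algebra ℂ B] (D : QSpace q B) (a i : Fin 3) : B :=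
  match a.1, i.1 with
  | 0, 0 => D.u
  | 1, 0 => ((Real.sqrt q * (q + 1) : ℝ) : ℂ) • (D.ρi * D.u * D.x 2)
  | 1, 1 => D.ρi
  | 2, 0 => -(((Real.sqrt q * q * (q + 1) : ℝ)) : ℂ) • (D.ρi * D.ρi * D.u * (D.x 2 * D.x 2))
  | 2, 1 => -(((q + 1 : ℝ)) : ℂ) • (D.ρi * D.ρi * D.x 2)
  | 2, 2 => D.ρi * D.ρi * D.x 1
  | _, _ => 0

/-- The frame one-forms `θ^a = Λ⁻¹ Σ_i M^a_i ξ^i`. -/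
def theta {q : ℝ} {B : Type*} [Ring B] [Algebra ℂ B] (D : QSpace q B) (a : Fin 3) : B :=
  D.Λi * ∑ i : Fin 3, Mmat D a i * D.ξ i

/-- Explicit inverse of the frame matrix. -/
def Eexp {q : ℝ} {B : Type*} [Ring B] [Algebra ℂ B] (D : QSpace q B) (i a : Fin 3) : B :=
  match i.1, a.1 with
  | 0, 0 => D.x 1
  | 1, 0 => -((((Real.sqrt q * (q + 1) : ℝ)) : ℂ) • (D.u * (D.x 2 * D.x 1)))
  | 1, 1 => D.ρ
  | 2, 0 => -((((Real.sqrt q * (q + 1) : ℝ)) : ℂ) • (D.u * (D.x 2 * D.x 2)))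
  | 2, 1 => (((q + 1 : ℝ)) : ℂ) • (D.u * (D.x 2 * D.ρ))
  | 2, 2 => D.u * (D.ρ * D.ρ)
  | _, _ => 0

set_option maxHeartbeats 1600000 in
/-- The entries of the inverse frame matrix satisfy the gTT-relations:
if `E` is the two-sided inverse of `M`, then `Σ_{a,b} g^{ab} E^i_a E^j_b = ρ² g^{ij}`
and `Σ_{i,j} g_{ij} E^i_a E^j_b = ρ² g_{ab}`. -/
theorem gTT_relations (q : ℝ) (hq : 0 < q) (hq1 : q ≠ 1)
    {B : Type*} [Ring B] [Algebra ℂ B] (D : QSpace q B) (E : Fin 3 → Fin 3 → B)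
    (hE1 : ∀ i j : Fin 3, (∑ a : Fin 3, E i a * Mmat D a j) = if i = j then 1 else 0)
    (hE2 : ∀ a b : Fin 3, (∑ i : Fin 3, Mmat D a i * E i b) = if a = b then 1 else 0) :
    (∀ i j : Fin 3,
      (∑ a : Fin 3, ∑ b : Fin 3, gm q a b • (E i a * E j b)) = gm q i j • (D.ρ * D.ρ)) ∧
    (∀ a b : Fin 3,
      (∑ i : Fin 3, ∑ j : Fin 3, gm q i j • (E i a * E j b)) = gm q a b • (D.ρ * D.ρ)) := by
  have hq0 : ((q : ℝ) : ℂ) ≠ 0 := by exact_mod_cast hq.ne'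
  have hs0 : ((Real.sqrt q : ℝ) : ℂ) ≠ 0 := by
    rw [Complex.ofReal_ne_zero]
    exact (Real.sqrt_ne_zero'.mpr hq)
  have hq_eq : ((q : ℝ) : ℂ) = ((Real.sqrt q : ℝ) : ℂ) * ((Real.sqrt q : ℝ) : ℂ) := by
    rw [← Complex.ofReal_mul, Real.mul_self_sqrt hq.le]
  -- basic relations
  have rux : D.u * D.x 1 = 1 := D.rel_ux
  have rxu : D.x 1 * D.u = 1 := D.rel_xu
  have h31 : D.x 2 * D.x 1 = (((q : ℝ) : ℂ))⁻¹ • (D.x 1 * D.x 2) := D.rel_x32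
  have h13 : D.x 1 * D.x 2 = ((q : ℝ) : ℂ) • (D.x 2 * D.x 1) := by
    rw [h31, smul_smul, mul_inv_cancel₀ hq0, one_smul]
  have hXu : D.x 2 * D.u = ((q : ℝ) : ℂ) • (D.u * D.x 2) := by
    calc D.x 2 * D.u = (D.u * D.x 1) * (D.x 2 * D.u) := by rw [rux, one_mul]
      _ = D.u * (D.x 1 * D.x 2) * D.u := by simp only [mul_assoc]
      _ = D.u * (((q : ℝ) : ℂ) • (D.x 2 * D.x 1)) * D.u := by rw [h13]
      _ = ((q : ℝ) : ℂ) • (D.u * D.x 2 * (D.x 1 * D.u)) := by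
          simp only [mul_smul_comm, smul_mul_assoc, mul_assoc]
      _ = ((q : ℝ) : ℂ) • (D.u * D.x 2) := by rw [rxu, mul_one]
  have hρu : D.ρ * D.u = D.u * D.ρ := by
    calc D.ρ * D.u = (D.u * D.x 1) * (D.ρ * D.u) := by rw [rux, one_mul]
      _ = D.u * (D.x 1 * D.ρ) * D.u := by simp only [mul_assoc]
      _ = D.u * (D.ρ * D.x 1) * D.u := by rw [D.rel_ρx 1]
      _ = D.u * D.ρ * (D.x 1 * D.u) := by simp only [mul_assoc]
      _ = D.u * D.ρ := by rw [rxu, mul_one]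
  have hρiu : D.ρi * D.u = D.u * D.ρi := by
    calc D.ρi * D.u = D.ρi * D.u * (D.ρ * D.ρi) := by rw [D.rel_ρρi, mul_one]
      _ = D.ρi * (D.u * D.ρ) * D.ρi := by simp only [mul_assoc]
      _ = D.ρi * (D.ρ * D.u) * D.ρi := by rw [hρu]
      _ = (D.ρi * D.ρ) * (D.u * D.ρi) := by simp only [mul_assoc]
      _ = D.u * D.ρi := by rw [D.rel_ρiρ, one_mul]
  have hρiX : ∀ i : Fin 3, D.ρi * D.x i = D.x i * D.ρi := by
    intro i
    calc D.ρi * D.x i = D.ρi * D.x i * (D.ρ * D.ρi) := by rw [D.rel_ρρi, mul_one]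
      _ = D.ρi * (D.x i * D.ρ) * D.ρi := by simp only [mul_assoc]
      _ = D.ρi * (D.ρ * D.x i) * D.ρi := by rw [D.rel_ρx i]
      _ = (D.ρi * D.ρ) * (D.x i * D.ρi) := by simp only [mul_assoc]
      _ = D.x i * D.ρi := by rw [D.rel_ρiρ, one_mul]
  -- right-nested versions
  have Hux : ∀ b : B, D.u * (D.x 1 * b) = b := fun b => by
    rw [← mul_assoc, rux, one_mul]
  have Hxu : ∀ b : B, D.x 1 * (D.u * b) = b := fun b => by
    rw [← mul_assoc, rxu, one_mul]
  have HXu : ∀ b : B, D.x 2 * (D.u * b) = ((q : ℝ) : ℂ) • (D.u * (D.x 2 * b)) := fun b => by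
    rw [← mul_assoc, hXu, smul_mul_assoc, mul_assoc]
  have H31 : ∀ b : B, D.x 2 * (D.x 1 * b) = (((q : ℝ) : ℂ))⁻¹ • (D.x 1 * (D.x 2 * b)) :=
    fun b => by rw [← mul_assoc, h31, smul_mul_assoc, mul_assoc]
  have Hρu : ∀ b : B, D.ρ * (D.u * b) = D.u * (D.ρ * b) := fun b => by
    rw [← mul_assoc, hρu, mul_assoc]
  have Hρx : ∀ (i : Fin 3) (b : B), D.ρ * (D.x i * b) = D.x i * (D.ρ * b) := fun i b => by
    rw [← mul_assoc, D.rel_ρx i, mul_assoc]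
  have Hρiu : ∀ b : B, D.ρi * (D.u * b) = D.u * (D.ρi * b) := fun b => by
    rw [← mul_assoc, hρiu, mul_assoc]
  have HρiX : ∀ (i : Fin 3) (b : B), D.ρi * (D.x i * b) = D.x i * (D.ρi * b) := fun i b => by
    rw [← mul_assoc, hρiX i, mul_assoc]
  have Hρρi : ∀ b : B, D.ρ * (D.ρi * b) = b := fun b => by
    rw [← mul_assoc, D.rel_ρρi, one_mul]
  have Hρiρ : ∀ b : B, D.ρi * (D.ρ * b) = b := fun b => by
    rw [← mul_assoc, D.rel_ρiρ, one_mul]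
  -- M * Eexp = 1
  have hME : ∀ a b : Fin 3, (∑ i : Fin 3, Mmat D a i * Eexp D i b) = if a = b then 1 else 0 := by
    intro a b
    fin_cases a <;> fin_cases b <;>
      simp [Mmat, Eexp, Fin.sum_univ_three, mul_assoc, smul_mul_assoc, mul_smul_comm,
        smul_smul, rux, rxu, h31, hXu, hρu, D.rel_ρx, D.rel_ρρi, D.rel_ρiρ, hρiu, hρiX,
        Hux, Hxu, HXu, H31, Hρu, Hρx, Hρiu, HρiX, Hρρi, Hρiρ, Complex.ofReal_mul,
        Complex.ofReal_add, Complex.ofReal_one, hq_eq] <;>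
      (try match_scalars) <;> (try ring_nf) <;> (try field_simp [hs0]) <;> (try ring)
  have hEeq : ∀ i b : Fin 3, E i b = Eexp D i b := by
    intro i b
    calc E i b = ∑ a : Fin 3, E i a * (if a = b then 1 else 0) := by
          fin_cases b <;> simp [Fin.sum_univ_three]
      _ = ∑ a : Fin 3, E i a * (∑ k : Fin 3, Mmat D a k * Eexp D k b) := by
          simp only [hME]
      _ = ∑ k : Fin 3, (∑ a : Fin 3, E i a * Mmat D a k) * Eexp D k b := by
          simp only [Finset.mul_sum, Finset.sum_mul, mul_assoc]
          exact Finset.sum_comm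
      _ = ∑ k : Fin 3, (if i = k then 1 else 0) * Eexp D k b := by simp only [hE1]
      _ = Eexp D i b := by fin_cases i <;> simp [Fin.sum_univ_three]
  constructor <;> intro i j <;> fin_cases i <;> fin_cases j <;>
    simp only [hEeq] <;>
    simp [Eexp, gm, Fin.sum_univ_three, mul_assoc, smul_mul_assoc, mul_smul_comm,
      smul_smul, rux, rxu, h31, hXu, hρu, D.rel_ρx, D.rel_ρρi, D.rel_ρiρ, hρiu, hρiX,
      Hux, Hxu, HXu, H31, Hρu, Hρx, Hρiu, HρiX, Hρρi, Hρiρ, Complex.ofReal_mul,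
      Complex.ofReal_add, Complex.ofReal_one, hq_eq] <;>
    (try match_scalars) <;> (try ring_nf) <;> (try field_simp [hs0]) <;> (try ring)

end
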